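/- arXiv:1312.4973 — 3 statements merged into one kernel-verified Lean document; each statement's English description precedes it below -/
import Mathlib

section
/- For every integer q ≥ 1, the metric dimension of the square lattice graph H(2,q) equals ⌊(2/3)(2q − 1)⌋, i.e. the floor of 2(2q−1)/3. -/
/-- `S` is a resolving set for the graph `G`: every pair of distinct vertices is
resolved by some vertex of `S` (via the geodesic distance `SimpleGraph.dist`). -/
def IsResolvingSet {V : Type*} (G : SimpleGraph V) (S : Set V) : Prop :=
  ∀ u w : V, u ≠ w → ∃ v ∈ S, G.dist u v ≠ G.dist w v

/-- The metric dimension of `G`: the smallest size of a resolving set. -/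
noncomputable def metricDim {V : Type*} (G : SimpleGraph V) : ℕ :=
  sInf {n : ℕ | ∃ S : Finset V, IsResolvingSet G (↑S) ∧ S.card = n}

/-- The Hamming graph `H(d,q)`: vertices are the d-tuples over an alphabet of
size `q`, adjacent when they differ in exactly one coordinate. -/
def hammingGraph (d q : ℕ) : SimpleGraph (Fin d → Fin q) where
  Adj x y := ∃! i, x i ≠ y i
  symm := ⟨fun x y h => by
    obtain ⟨i, hi, hu⟩ := h
    exact ⟨i, hi.symm, fun j hj => hu j hj.symm⟩⟩
  loopless := ⟨fun x h => by
    obtain ⟨i, hi, -⟩ := h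
    exact hi rfl⟩

/-!
In `H(2,q)` graph distance is Hamming distance, so a set `S` of vertices is a set of cells of a
`q × q` board. Call a line (row or column) *empty* if it meets no cell of `S`, and a cell of `S`
*isolated* if it is alone in its row and in its column. A pair of vertices that `S` fails to
resolve exhibits two empty parallel lines, two isolated cells, or an isolated cell together with an
empty row and an empty column, and each of these configurations produces such a pair; this
characterizes resolving sets. Every used line carries two cells of `S` or a cell alone in that
line, which with the characterization gives `4q ≤ 3|S| + 4`; dominoes and at most one L-tromino
placed along the diagonal attain this bound.
-/

open Finset SimpleGraph

theorem hammingDist_update_lt {ι β : Type*} [Fintype ι] [DecidableEq ι] [DecidableEq β]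
    {x y : ι → β} {i : ι} (hi : x i ≠ y i) :
    hammingDist (Function.update x i (y i)) y < hammingDist x y := by
  refine card_lt_card ((ssubset_iff_of_subset fun j => ?_).mpr ⟨i, by simpa using hi, by simp⟩)
  by_cases hji : j = i <;> simp [hji]

section HammingGraph

variable {d q : ℕ}

theorem hammingGraph_adj_iff {x y : Fin d → Fin q} :
    (hammingGraph d q).Adj x y ↔ hammingDist x y = 1 :=
  Fintype.existsUnique_iff_card_one _

theorem hammingDist_le_length {x y : Fin d → Fin q} (p : (hammingGraph d q).Walk x y) :
    hammingDist x y ≤ p.length := by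
  induction p with
  | nil => simp
  | @cons x y z h p ih =>
    have := hammingDist_triangle x y z
    rw [hammingGraph_adj_iff.mp h] at this
    rw [Walk.length_cons]
    omega

theorem exists_walk_length_le_hammingDist (x y : Fin d → Fin q) :
    ∃ p : (hammingGraph d q).Walk x y, p.length ≤ hammingDist x y := by
  induction hn : hammingDist x y using Nat.strong_induction_on generalizing x with
  | _ n ih =>
  by_cases hxy : x = y
  · subst hxy
    exact ⟨.nil, by simp⟩
  obtain ⟨i, hi⟩ := Function.ne_iff.mp hxy
  have hadj : (hammingGraph d q).Adj x (Function.update x i (y i)) :=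
    ⟨i, by simpa using hi, fun j hj => by_contra fun hji => hj (by simp [hji])⟩
  have hlt := hn ▸ hammingDist_update_lt hi
  obtain ⟨p, hp⟩ := ih _ hlt _ rfl
  exact ⟨.cons hadj p, by rw [Walk.length_cons]; omega⟩

theorem hammingGraph_dist (x y : Fin d → Fin q) :
    (hammingGraph d q).dist x y = hammingDist x y := by
  obtain ⟨p, hp⟩ := exists_walk_length_le_hammingDist x y
  obtain ⟨r, hr⟩ := p.reachable.exists_walk_length_eq_dist
  exact le_antisymm ((dist_le p).trans hp) (hr ▸ hammingDist_le_length r)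

theorem isResolvingSet_hammingGraph_iff (S : Set (Fin d → Fin q)) :
    IsResolvingSet (hammingGraph d q) S ↔
      ∀ u w, u ≠ w → ∃ v ∈ S, hammingDist u v ≠ hammingDist w v := by
  simp only [IsResolvingSet, hammingGraph_dist]

end HammingGraph

theorem hammingDist_eq_hammingDist_iff_of_eqOn_ne {ι β : Type*} [Fintype ι] [DecidableEq ι]
    [DecidableEq β] {u w : ι → β} {k : ι} (huw : ∀ j ≠ k, u j = w j) (v : ι → β) :
    hammingDist u v = hammingDist w v ↔ (u k = v k ↔ w k = v k) := by
  have hsplit (x : ι → β) : hammingDist x v =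
      (if x k ≠ v k then 1 else 0) + ∑ j ∈ univ.erase k, if x j ≠ v j then 1 else 0 := by
    rw [hammingDist, card_filter, ← add_sum_erase _ _ (mem_univ k)]
  rw [hsplit, hsplit, sum_congr rfl fun j hj => by rw [huw j (ne_of_mem_erase hj)]]
  split_ifs <;> simp_all

theorem hammingDist_fin_two {β : Type*} [DecidableEq β] (x y : Fin 2 → β) :
    hammingDist x y = (if x 0 = y 0 then 0 else 1) + (if x 1 = y 1 then 0 else 1) := by
  simp only [hammingDist, card_filter, Fin.sum_univ_two, ite_not]

theorem hammingDist_eq_hammingDist_iff_of_ne_of_ne {β : Type*} [DecidableEq β]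
    {u w : Fin 2 → β} (h0 : u 0 ≠ w 0) (h1 : u 1 ≠ w 1) (v : Fin 2 → β) :
    hammingDist u v = hammingDist w v ↔
      (v 0 = u 0 ∧ v 1 = w 1) ∨ (v 0 = w 0 ∧ v 1 = u 1) ∨
        (v 0 ≠ u 0 ∧ v 0 ≠ w 0 ∧ v 1 ≠ u 1 ∧ v 1 ≠ w 1) := by
  rw [hammingDist_fin_two, hammingDist_fin_two]
  by_cases a : v 0 = u 0 <;> by_cases b : v 0 = w 0 <;> by_cases c : v 1 = u 1 <;>
    by_cases d : v 1 = w 1 <;> simp_all [eq_comm]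

theorem eq_vec_two {β : Type*} {v : Fin 2 → β} {a b : β} (h0 : v 0 = a) (h1 : v 1 = b) :
    v = ![a, b] := by
  ext k
  fin_cases k <;> simpa

theorem two_mul_card_image_le_card_add_card_filter {β γ : Type*} [DecidableEq β] [DecidableEq γ]
    (f : β → γ) (s : Finset β) :
    2 * #(s.image f) ≤ #s + #{x ∈ s | ∀ y ∈ s, f y = f x → y = x} := by
  rw [card_eq_sum_card_fiberwise (t := s.image f) fun x hx => mem_image_of_mem f hx,
    card_eq_sum_card_fiberwise (t := s.image f) fun x hx => mem_image_of_mem f (mem_filter.mp hx).1,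
    ← sum_add_distrib, mul_comm, ← smul_eq_mul, ← sum_const]
  refine sum_le_sum fun i hi => ?_
  obtain ⟨x, hx, rfl⟩ := mem_image.mp hi
  by_cases hlone : ∀ y ∈ s, f y = f x → y = x
  · have h1 : 0 < #{y ∈ s | f y = f x} := card_pos.mpr ⟨x, by simp [hx]⟩
    have h2 : 0 < #{y ∈ {x ∈ s | ∀ y ∈ s, f y = f x → y = x} | f y = f x} :=
      card_pos.mpr ⟨x, mem_filter.mpr ⟨mem_filter.mpr ⟨hx, hlone⟩, rfl⟩⟩
    omega
  · push Not at hlone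
    obtain ⟨y, hy, hfy, hyx⟩ := hlone
    have : 1 < #{y ∈ s | f y = f x} :=
      one_lt_card.mpr ⟨y, by simp [hy, hfy], x, by simp [hx], hyx⟩
    omega

theorem card_le_card_add_one_of_subsingleton_compl {β : Type*} [Fintype β] [DecidableEq β]
    {t : Finset β} (ht : {i | i ∉ t}.Subsingleton) : Fintype.card β ≤ #t + 1 := by
  rw [← card_add_card_compl t]
  have : #tᶜ ≤ 1 := card_le_one.mpr fun a ha b hb => ht (mem_compl.mp ha) (mem_compl.mp hb)
  omega

section Rook

variable {α : Type*} (S : Finset (Fin 2 → α))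

def LineEmpty (k : Fin 2) (i : α) : Prop := ∀ v ∈ S, v k ≠ i

def Isolated (v : Fin 2 → α) : Prop := v ∈ S ∧ ∀ w ∈ S, ∀ k, w k = v k → w = v

structure RookConditions : Prop where
  lineEmpty_subsingleton (k : Fin 2) : {i | LineEmpty S k i}.Subsingleton
  isolated_subsingleton : {v | Isolated S v}.Subsingleton
  not_isolated_of_lineEmpty {v : Fin 2 → α} {i j : α} :
    LineEmpty S 0 i → LineEmpty S 1 j → ¬ Isolated S v

variable {S}

theorem Isolated.eq_or_ne_ne {v s : Fin 2 → α} (hv : Isolated S v) (hs : s ∈ S) :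
    s = v ∨ s 0 ≠ v 0 ∧ s 1 ≠ v 1 := by
  by_cases h0 : s 0 = v 0
  · exact .inl (hv.2 s hs 0 h0)
  by_cases h1 : s 1 = v 1
  · exact .inl (hv.2 s hs 1 h1)
  exact .inr ⟨h0, h1⟩

variable [DecidableEq α]

theorem isolated_or_lineEmpty_of_forall_hammingDist_eq {u w : Fin 2 → α} (h0 : u 0 ≠ w 0)
    (h1 : u 1 ≠ w 1) (hS : ∀ v ∈ S, hammingDist u v = hammingDist w v) :
    Isolated S ![u 0, w 1] ∨ LineEmpty S 0 (u 0) ∧ LineEmpty S 1 (w 1) := by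
  have hcases v (hv : v ∈ S) := (hammingDist_eq_hammingDist_iff_of_ne_of_ne h0 h1 v).mp (hS v hv)
  by_cases hP : ![u 0, w 1] ∈ S
  · refine .inl ⟨hP, fun v hv k hk => ?_⟩
    fin_cases k <;> rcases hcases v hv with h | h | h
    all_goals first
      | exact eq_vec_two h.1 h.2
      | simp_all
  · refine .inr ⟨fun v hv hk => ?_, fun v hv hk => ?_⟩ <;> rcases hcases v hv with h | h | h
    all_goals first
      | exact hP (eq_vec_two h.1 h.2 ▸ hv)
      | simp_all

theorem RookConditions.exists_hammingDist_ne (hS : RookConditions S) {u w : Fin 2 → α}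
    (huw : u ≠ w) : ∃ v ∈ S, hammingDist u v ≠ hammingDist w v := by
  by_contra! hres
  obtain ⟨k, hk⟩ := Function.ne_iff.mp huw
  by_cases hline : ∀ j ≠ k, u j = w j
  · have hempty {x} (hx : x = u k ∨ x = w k) : LineEmpty S k x := fun v hv hvx => by
      have := (hammingDist_eq_hammingDist_iff_of_eqOn_ne hline v).mp (hres v hv)
      rcases hx with rfl | rfl <;> simp_all [eq_comm]
    exact hk (hS.lineEmpty_subsingleton k (hempty (.inl rfl)) (hempty (.inr rfl)))
  push Not at hline
  obtain ⟨j, hjk, hj⟩ := hline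
  obtain ⟨h0, h1⟩ : u 0 ≠ w 0 ∧ u 1 ≠ w 1 := by fin_cases j <;> fin_cases k <;> simp_all
  rcases isolated_or_lineEmpty_of_forall_hammingDist_eq h0 h1 hres with hP | ⟨hu0, hw1⟩ <;>
  rcases isolated_or_lineEmpty_of_forall_hammingDist_eq h0.symm h1.symm
    (fun v hv => (hres v hv).symm) with hP' | ⟨hw0, hu1⟩
  · exact h0 (congrFun (hS.isolated_subsingleton hP hP') 0)
  · exact hS.not_isolated_of_lineEmpty hw0 hu1 hP
  · exact hS.not_isolated_of_lineEmpty hu0 hw1 hP'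
  · exact h0 (hS.lineEmpty_subsingleton 0 hu0 hw0)

theorem rookConditions_of_forall_exists_hammingDist_ne
    (hS : ∀ u w : Fin 2 → α, u ≠ w → ∃ v ∈ S, hammingDist u v ≠ hammingDist w v) :
    RookConditions S where
  lineEmpty_subsingleton k i hi i' hi' := by
    by_contra hne
    obtain ⟨v, hv, hres⟩ := hS (Function.update (fun _ => i) k i)
      (Function.update (fun _ => i) k i') (fun h => hne (by simpa using congrFun h k))
    refine hres ((hammingDist_eq_hammingDist_iff_of_eqOn_ne (k := k) (fun j hj => ?_) v).mpr ?_)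
    · simp [hj]
    · simp [(hi v hv).symm, (hi' v hv).symm]
  isolated_subsingleton v hv w hw := by
    by_contra hne
    have hvw : w 0 ≠ v 0 ∧ w 1 ≠ v 1 := (hv.eq_or_ne_ne hw.1).resolve_left (Ne.symm hne)
    obtain ⟨s, hs, hres⟩ := hS ![v 0, w 1] ![w 0, v 1] (fun h => hvw.1 (congrFun h 0).symm)
    refine hres ((hammingDist_eq_hammingDist_iff_of_ne_of_ne ?_ ?_ s).mpr ?_)
    · simpa using hvw.1.symm
    · simpa using hvw.2
    rcases hv.eq_or_ne_ne hs with rfl | hsv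
    · simp
    rcases hw.eq_or_ne_ne hs with rfl | hsw
    · simp
    · simp [hsv.1, hsv.2, hsw.1, hsw.2]
  not_isolated_of_lineEmpty {v i j} hi hj hv := by
    obtain ⟨s, hs, hres⟩ :=
      hS ![v 0, j] ![i, v 1] (fun h => hi v hv.1 (by simpa using congrFun h 0))
    refine hres ((hammingDist_eq_hammingDist_iff_of_ne_of_ne ?_ ?_ s).mpr ?_)
    · simpa using hi v hv.1
    · simpa using (hj v hv.1).symm
    rcases hv.eq_or_ne_ne hs with rfl | hsv
    · simp
    · simp [hsv.1, hsv.2, hi s hs, hj s hs]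

theorem lineEmpty_iff_notMem_image {k : Fin 2} {i : α} :
    LineEmpty S k i ↔ i ∉ S.image (· k) := by
  simp [LineEmpty]

theorem RookConditions.exists_card_le_card_image_of_isolated [Fintype α] {v : Fin 2 → α}
    (hS : RookConditions S) (hv : Isolated S v) : ∃ k, Fintype.card α ≤ #(S.image (· k)) := by
  by_contra! h
  have hempty k : ∃ i, LineEmpty S k i := by
    obtain ⟨i, -, hi⟩ := exists_mem_notMem_of_card_lt_card (s := S.image (· k)) (t := univ)
      (by simpa using h k)
    exact ⟨i, lineEmpty_iff_notMem_image.mpr hi⟩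
  obtain ⟨i, hi⟩ := hempty 0
  obtain ⟨j, hj⟩ := hempty 1
  exact hS.not_isolated_of_lineEmpty hi hj hv

theorem RookConditions.card_le_card_image_add_one [Fintype α] (hS : RookConditions S)
    (k : Fin 2) : Fintype.card α ≤ #(S.image (· k)) + 1 :=
  card_le_card_add_one_of_subsingleton_compl fun _ hi _ hi' =>
    hS.lineEmpty_subsingleton k (lineEmpty_iff_notMem_image.mpr hi)
      (lineEmpty_iff_notMem_image.mpr hi')

theorem RookConditions.four_mul_card_le [Fintype α] (hS : RookConditions S) :
    4 * Fintype.card α ≤ 3 * #S + 4 := by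
  let A (k : Fin 2) := {v ∈ S | ∀ w ∈ S, w k = v k → w = v}
  have hfiber k : 2 * #(S.image (· k)) ≤ #S + #(A k) :=
    by convert two_mul_card_image_le_card_add_card_filter (· k) S
  have hunion : #(A 0) + #(A 1) ≤ #S + #(A 0 ∩ A 1) := by
    rw [← card_union_add_card_inter]
    gcongr
    exact union_subset (filter_subset _ _) (filter_subset _ _)
  have hisolated v (hv : v ∈ A 0 ∩ A 1) : Isolated S v := by
    simp only [A, mem_inter, mem_filter] at hv
    exact ⟨hv.1.1, fun w hw k hk => by fin_cases k; exacts [hv.1.2 w hw hk, hv.2.2 w hw hk]⟩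
  have := hS.card_le_card_image_add_one 0
  have := hS.card_le_card_image_add_one 1
  have := hfiber 0
  have := hfiber 1
  rcases (A 0 ∩ A 1).eq_empty_or_nonempty with hI | ⟨v, hv⟩
  · rw [hI, card_empty] at hunion
    omega
  · have : #(A 0 ∩ A 1) ≤ 1 := card_le_one.mpr fun v hv w hw =>
      hS.isolated_subsingleton (hisolated v hv) (hisolated w hw)
    obtain ⟨k, hk⟩ := hS.exists_card_le_card_image_of_isolated (hisolated v hv)
    fin_cases k <;> simp at hk <;> omega

end Rook

/- Cell `n` of an optimal landmark set: indices `n < 2a` form `a` vertical dominoes, the next `2b`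
form `b` horizontal dominoes, and `2a+2b, 2a+2b+1, 2a+2b+2` an L-tromino. The first
`2a+2b+3e` cells (`e ≤ 1`) fill rows `< 2a+b+2e` and columns `< a+2b+2e`, each sharing a line
with another cell. -/
def landmarkRow (a b n : ℕ) : ℕ :=
  if n < 2 * a then n
  else if n < 2 * a + 2 * b then 2 * a + (n - 2 * a) / 2
  else if n = 2 * a + 2 * b + 2 then 2 * a + b + 1 else 2 * a + b

def landmarkCol (a b n : ℕ) : ℕ :=
  if n < 2 * a then n / 2
  else if n < 2 * a + 2 * b then a + (n - 2 * a)
  else if n = 2 * a + 2 * b + 1 then a + 2 * b + 1 else a + 2 * b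

section Landmarks

variable {a b e n : ℕ}

theorem landmarkRow_lt (he : e ≤ 1) (hn : n < 2 * a + 2 * b + 3 * e) :
    landmarkRow a b n < 2 * a + b + 2 * e := by
  unfold landmarkRow; split_ifs <;> omega

theorem landmarkCol_lt (he : e ≤ 1) (hn : n < 2 * a + 2 * b + 3 * e) :
    landmarkCol a b n < a + 2 * b + 2 * e := by
  unfold landmarkCol; split_ifs <;> omega

theorem landmark_injective {n' : ℕ} (he : e ≤ 1) (hn : n < 2 * a + 2 * b + 3 * e)
    (hn' : n' < 2 * a + 2 * b + 3 * e) (hrow : landmarkRow a b n = landmarkRow a b n')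
    (hcol : landmarkCol a b n = landmarkCol a b n') : n = n' := by
  unfold landmarkRow at hrow
  unfold landmarkCol at hcol
  split_ifs at hrow hcol <;> omega

theorem exists_landmarkRow_eq {x : ℕ} (he : e ≤ 1) (hx : x < 2 * a + b + 2 * e) :
    ∃ n < 2 * a + 2 * b + 3 * e, landmarkRow a b n = x := by
  refine ⟨if x < 2 * a then x else if x < 2 * a + b then 2 * a + 2 * (x - 2 * a)
    else if x = 2 * a + b then 2 * a + 2 * b else 2 * a + 2 * b + 2, ?_, ?_⟩
  · split_ifs <;> omega
  · unfold landmarkRow; split_ifs <;> omega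

theorem exists_landmarkCol_eq {y : ℕ} (he : e ≤ 1) (hy : y < a + 2 * b + 2 * e) :
    ∃ n < 2 * a + 2 * b + 3 * e, landmarkCol a b n = y := by
  refine ⟨if y < a then 2 * y else if y < a + 2 * b then 2 * a + (y - a)
    else if y = a + 2 * b then 2 * a + 2 * b else 2 * a + 2 * b + 1, ?_, ?_⟩
  · split_ifs <;> omega
  · unfold landmarkCol; split_ifs <;> omega

theorem exists_landmark_ne_and_row_or_col_eq (he : e ≤ 1) (hn : n < 2 * a + 2 * b + 3 * e) :
    ∃ n' < 2 * a + 2 * b + 3 * e, n' ≠ n ∧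
      (landmarkRow a b n' = landmarkRow a b n ∨ landmarkCol a b n' = landmarkCol a b n) := by
  refine ⟨if n < 2 * a + 2 * b then (if n % 2 = 0 then n + 1 else n - 1)
    else if n = 2 * a + 2 * b then n + 1 else 2 * a + 2 * b, ?_, ?_, ?_⟩
  · split_ifs <;> omega
  · split_ifs <;> omega
  · unfold landmarkRow landmarkCol; split_ifs <;> omega

end Landmarks

theorem rookConditions_of_forall_not_isolated {q : ℕ} {S : Finset (Fin 2 → Fin q)}
    (hiso : ∀ v, ¬ Isolated S v) (hline : ∀ k i, LineEmpty S k i → q ≤ i + 1) :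
    RookConditions S where
  lineEmpty_subsingleton k i hi i' hi' := by
    have := hline k i hi
    have := hline k i' hi'
    exact Fin.ext (by omega)
  isolated_subsingleton v hv := absurd hv (hiso v)
  not_isolated_of_lineEmpty _ _ := hiso _

theorem exists_rookConditions_card {q a b e : ℕ} (he : e ≤ 1) (hrow : 2 * a + b + 2 * e ≤ q)
    (hcol : a + 2 * b + 2 * e ≤ q) (hrow' : q ≤ 2 * a + b + 2 * e + 1)
    (hcol' : q ≤ a + 2 * b + 2 * e + 1) :
    ∃ S : Finset (Fin 2 → Fin q), RookConditions S ∧ #S = 2 * a + 2 * b + 3 * e := by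
  let cell (n : Fin (2 * a + 2 * b + 3 * e)) : Fin 2 → Fin q :=
    ![⟨landmarkRow a b n, (landmarkRow_lt he n.2).trans_le hrow⟩,
      ⟨landmarkCol a b n, (landmarkCol_lt he n.2).trans_le hcol⟩]
  have hinj : Function.Injective cell := fun n n' h => Fin.ext <| landmark_injective he n.2 n'.2
    (congrArg Fin.val (congrFun h 0)) (congrArg Fin.val (congrFun h 1))
  have hmem n : cell n ∈ univ.image cell := mem_image_of_mem _ (mem_univ _)
  refine ⟨univ.image cell, rookConditions_of_forall_not_isolated ?_ ?_, by
    rw [card_image_of_injective _ hinj, card_univ, Fintype.card_fin]⟩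
  · rintro v ⟨hv, hiso⟩
    obtain ⟨n, -, rfl⟩ := mem_image.mp hv
    obtain ⟨n', hn', hne, hline⟩ := exists_landmark_ne_and_row_or_col_eq he n.2
    suffices cell ⟨n', hn'⟩ = cell n from hne (congrArg Fin.val (hinj this))
    rcases hline with h | h
    exacts [hiso _ (hmem _) 0 (Fin.ext h), hiso _ (hmem _) 1 (Fin.ext h)]
  · intro k i hi
    by_contra! hlt
    fin_cases k
    · obtain ⟨n, hn, hrow⟩ := exists_landmarkRow_eq (a := a) (b := b) he (x := i) (by omega)
      exact hi _ (hmem ⟨n, hn⟩) (Fin.ext hrow)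
    · obtain ⟨n, hn, hcol⟩ := exists_landmarkCol_eq (a := a) (b := b) he (y := i) (by omega)
      exact hi _ (hmem ⟨n, hn⟩) (Fin.ext hcol)

theorem exists_rookConditions_card_eq (q : ℕ) :
    ∃ S : Finset (Fin 2 → Fin q), RookConditions S ∧ #S = 2 * (2 * q - 1) / 3 := by
  obtain ⟨a, b, e, he, hrow, hcol, hrow', hcol', hcard⟩ : ∃ a b e, e ≤ 1 ∧
      2 * a + b + 2 * e ≤ q ∧ a + 2 * b + 2 * e ≤ q ∧ q ≤ 2 * a + b + 2 * e + 1 ∧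
      q ≤ a + 2 * b + 2 * e + 1 ∧ 2 * a + 2 * b + 3 * e = 2 * (2 * q - 1) / 3 := by
    rcases (by omega : q = 0 ∨ q % 3 = 1 ∨ q % 3 = 2 ∨ q % 3 = 0 ∧ 0 < q) with h | h | h | h
    · exact ⟨0, 0, 0, by omega⟩
    · exact ⟨q / 3, q / 3, 0, by omega⟩
    · exact ⟨q / 3 + 1, q / 3, 0, by omega⟩
    · exact ⟨q / 3 - 1, q / 3 - 1, 1, by omega⟩
  exact hcard ▸ exists_rookConditions_card he hrow hcol hrow' hcol'

theorem isResolvingSet_hammingGraph_two_iff {q : ℕ} (S : Finset (Fin 2 → Fin q)) :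
    IsResolvingSet (hammingGraph 2 q) S ↔ RookConditions S := by
  simp only [isResolvingSet_hammingGraph_iff, mem_coe]
  exact ⟨rookConditions_of_forall_exists_hammingDist_ne, fun hS _ _ => hS.exists_hammingDist_ne⟩

theorem metricDim_eq_of_forall_le {V : Type*} {G : SimpleGraph V} {n : ℕ}
    (hex : ∃ S : Finset V, IsResolvingSet G S ∧ #S = n)
    (hle : ∀ S : Finset V, IsResolvingSet G S → n ≤ #S) : metricDim G = n :=
  le_antisymm (Nat.sInf_le hex) <|
    le_csInf ⟨n, hex⟩ fun _ ⟨S, hS, hcard⟩ => hcard ▸ hle S hS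

theorem metricDim_squareLattice_general (q : ℕ) :
    metricDim (hammingGraph 2 q) = 2 * (2 * q - 1) / 3 := by
  obtain ⟨S, hS, hcard⟩ := exists_rookConditions_card_eq q
  refine metricDim_eq_of_forall_le ⟨S, (isResolvingSet_hammingGraph_two_iff S).mpr hS, hcard⟩
    fun T hT => ?_
  have := ((isResolvingSet_hammingGraph_two_iff T).mp hT).four_mul_card_le
  rw [Fintype.card_fin] at this
  omega

theorem metricDim_squareLattice (q : ℕ) (hq : 1 ≤ q) :
    metricDim (hammingGraph 2 q) = 2 * (2 * q - 1) / 3 :=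
  metricDim_squareLattice_general q
end

section
/- The Hamming graph H(3,3) has metric dimension 4. -/
/-!
The graph distance of `H(d,q)` is the Hamming distance, so everything reduces to finite
checks on the 27 words of length 3. The four words `000, 001, 010, 100` resolve `H(3,3)`.
Conversely, translations preserve Hamming distance and map resolving sets to resolving sets,
so a three-element resolving set could be moved to one containing `0`; an exhaustive search
over the remaining two landmarks shows none exists. A smaller resolving set would extend to a
three-element one.
-/

theorem hammingDist_add_right {ι : Type*} [Fintype ι] {β : ι → Type*} [∀ i, AddGroup (β i)]
    [∀ i, DecidableEq (β i)] (x y a : ∀ i, β i) :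
    hammingDist (x + a) (y + a) = hammingDist x y :=
  hammingDist_comp (fun i => (· + a i)) fun i => add_left_injective (a i)

theorem hammingDist_update_add_one {ι : Type*} [Fintype ι] [DecidableEq ι] {β : ι → Type*}
    [∀ i, DecidableEq (β i)] {x y : ∀ i, β i} {i : ι} (h : x i ≠ y i) :
    hammingDist (Function.update x i (y i)) y + 1 = hammingDist x y := by
  have hfilter : ({j | Function.update x i (y i) j ≠ y j} : Finset ι)
      = ({j | x j ≠ y j} : Finset ι).erase i := by
    ext j
    by_cases hj : j = i <;> simp [hj]
  rw [hammingDist, hfilter, Finset.card_erase_add_one (by simpa using h), hammingDist]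

theorem hammingDist_update_self {ι : Type*} [Fintype ι] [DecidableEq ι] {β : ι → Type*}
    [∀ i, DecidableEq (β i)] {x : ∀ i, β i} {i : ι} {b : β i} (h : x i ≠ b) :
    hammingDist x (Function.update x i b) = 1 := by
  simpa [eq_comm] using
    hammingDist_update_add_one (x := x) (y := Function.update x i b) (i := i) (by simpa using h)

section ResolvingSet

variable {V : Type*} {G : SimpleGraph V}

theorem IsResolvingSet.mono {S T : Set V} (hST : S ⊆ T) (hS : IsResolvingSet G S) :
    IsResolvingSet G T := fun u w huw =>
  let ⟨v, hv, hne⟩ := hS u w huw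
  ⟨v, hST hv, hne⟩

theorem IsResolvingSet.exists_card_eq [Fintype V] {S : Finset V} (hS : IsResolvingSet G S)
    {n : ℕ} (hSn : S.card ≤ n) (hn : n ≤ Fintype.card V) :
    ∃ T : Finset V, IsResolvingSet G T ∧ T.card = n := by
  obtain ⟨T, hST, -, hT⟩ := Finset.exists_subsuperset_card_eq (Finset.subset_univ S) hSn hn
  exact ⟨T, hS.mono (by exact_mod_cast hST), hT⟩

theorem metricDim_eq_of_isResolvingSet {S : Finset V} {k : ℕ} (hS : IsResolvingSet G S)
    (hSk : S.card = k) (hmin : ∀ T : Finset V, IsResolvingSet G T → k ≤ T.card) :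
    metricDim G = k :=
  le_antisymm (Nat.sInf_le ⟨S, hS, hSk⟩)
    (le_csInf ⟨k, S, hS, hSk⟩ fun _ ⟨T, hT, hTn⟩ => hTn ▸ hmin T hT)

end ResolvingSet

namespace hammingGraph

variable {d q : ℕ}

theorem adj_iff_hammingDist_eq_one {x y : Fin d → Fin q} :
    (hammingGraph d q).Adj x y ↔ hammingDist x y = 1 :=
  Fintype.existsUnique_iff_card_one _

theorem hammingDist_le_length {x y : Fin d → Fin q} (p : (hammingGraph d q).Walk x y) :
    hammingDist x y ≤ p.length := by
  induction p with
  | nil => simp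
  | @cons x y z hxy p ih =>
    calc hammingDist x z ≤ hammingDist x y + hammingDist y z := hammingDist_triangle x y z
      _ ≤ p.length + 1 := by rw [adj_iff_hammingDist_eq_one.mp hxy]; omega

theorem exists_walk_length_eq_hammingDist (x y : Fin d → Fin q) :
    ∃ p : (hammingGraph d q).Walk x y, p.length = hammingDist x y := by
  induction h : hammingDist x y generalizing x with
  | zero =>
    obtain rfl := hammingDist_eq_zero.mp h
    exact ⟨.nil, rfl⟩
  | succ n ih =>
    obtain ⟨i, hi⟩ : ∃ i, x i ≠ y i := Function.ne_iff.mp (hammingDist_pos.mp (by omega))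
    have hadj : (hammingGraph d q).Adj x (Function.update x i (y i)) :=
      adj_iff_hammingDist_eq_one.mpr (hammingDist_update_self hi)
    have hcloser := hammingDist_update_add_one hi
    obtain ⟨p, hp⟩ := ih (Function.update x i (y i)) (by omega)
    exact ⟨.cons hadj p, by simp [hp]⟩

theorem dist_eq_hammingDist (x y : Fin d → Fin q) :
    (hammingGraph d q).dist x y = hammingDist x y := by
  obtain ⟨p, hp⟩ := exists_walk_length_eq_hammingDist x y
  refine le_antisymm (hp ▸ SimpleGraph.dist_le p) ?_
  obtain ⟨p', hp'⟩ := SimpleGraph.Reachable.exists_walk_length_eq_dist ⟨p⟩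
  exact hp' ▸ hammingDist_le_length p'

theorem isResolvingSet_iff {S : Set (Fin d → Fin q)} :
    IsResolvingSet (hammingGraph d q) S ↔
      ∀ u w, u ≠ w → ∃ v ∈ S, hammingDist u v ≠ hammingDist w v := by
  simp only [IsResolvingSet, dist_eq_hammingDist]

theorem isResolvingSet_image_add_right [NeZero q] {S : Set (Fin d → Fin q)}
    (hS : IsResolvingSet (hammingGraph d q) S) (a : Fin d → Fin q) :
    IsResolvingSet (hammingGraph d q) ((· + a) '' S) := by
  rw [isResolvingSet_iff] at hS ⊢
  intro u w huw
  obtain ⟨v, hv, hne⟩ := hS (u - a) (w - a) (sub_left_injective.ne huw)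
  refine ⟨v + a, Set.mem_image_of_mem _ hv, ?_⟩
  rwa [← sub_add_cancel u a, ← sub_add_cancel w a, hammingDist_add_right, hammingDist_add_right]

theorem isResolvingSet_three_three :
    IsResolvingSet (hammingGraph 3 3)
      ↑({![0, 0, 0], ![0, 0, 1], ![0, 1, 0], ![1, 0, 0]} : Finset (Fin 3 → Fin 3)) := by
  rw [isResolvingSet_iff]
  decide

set_option maxHeartbeats 4000000 in
theorem not_isResolvingSet_three_three_insert_zero (b c : Fin 3 → Fin 3) :
    ¬ IsResolvingSet (hammingGraph 3 3) {0, b, c} := by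
  -- Membership in a `Set` literal is too expensive for `decide`: unfold it into disjunctions.
  simp only [isResolvingSet_iff, Set.mem_insert_iff, Set.mem_singleton_iff, exists_eq_or_imp,
    exists_eq_left]
  revert b c
  decide

theorem not_isResolvingSet_three_three_triple (a b c : Fin 3 → Fin 3) :
    ¬ IsResolvingSet (hammingGraph 3 3) {a, b, c} := fun h => by
  have h' := isResolvingSet_image_add_right h (-a)
  rw [Set.image_insert_eq, Set.image_insert_eq, Set.image_singleton, add_neg_cancel,
    ← sub_eq_add_neg, ← sub_eq_add_neg] at h'
  exact not_isResolvingSet_three_three_insert_zero _ _ h'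

end hammingGraph

theorem metricDim_hamming33 :
    metricDim (hammingGraph 3 3) = 4 := by
  refine metricDim_eq_of_isResolvingSet hammingGraph.isResolvingSet_three_three rfl
    fun T hT => ?_
  by_contra! hlt
  obtain ⟨U, hU, hU3⟩ := hT.exists_card_eq (n := 3) (by omega) (by simp)
  obtain ⟨a, b, c, -, -, -, rfl⟩ := Finset.card_eq_three.mp hU3
  exact hammingGraph.not_isResolvingSet_three_three_triple a b c (by simpa using hU)
end

section
/- The Heawood graph, i.e. the point–line incidence graph of the projective plane PG(2,2) (the Fano plane), has metric dimension 5. -/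
/-- The Heawood graph: the point–line incidence graph of the Fano plane
`PG(2,2)`.  Vertices are two copies (indexed by `Bool`) of the set of nonzero
vectors of the 3-dimensional vector space over `ℤ/2ℤ`; a vertex in one copy is
adjacent to a vertex in the other copy iff the dot product of the two vectors
is zero. -/
def heawoodGraph : SimpleGraph ({v : Fin 3 → ZMod 2 // v ≠ 0} × Bool) where
  Adj x y := x.2 ≠ y.2 ∧ ∑ k : Fin 3, x.1.val k * y.1.val k = 0
  symm := ⟨fun x y h => ⟨h.1.symm, by
    rw [← h.2]
    exact Finset.sum_congr rfl fun k _ => mul_comm _ _⟩⟩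
  loopless := ⟨fun x h => h.1 rfl⟩

/-!
Two distinct vertices of the Heawood graph are at distance 1 if incident, 2 if on the same side
(two points span a line and two lines meet in a point, given by the cross product), and 3
otherwise (parity). So a vertex outside a landmark set `S` lies at distance 2 from every landmark
on its own side, and is told apart from the other vertices of its side only by its incidences
with the landmarks of the other side. If `S` has `a` points and `b` lines this gives
`7 - a ≤ 2 ^ b` and `7 - b ≤ 2 ^ a`, which force `a + b ≥ 5`; three coordinate points and two
lines achieve it.
-/

theorem metricDim_eq_card_of_forall_card_le {V : Type*} {G : SimpleGraph V} {S : Finset V}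
    (hS : IsResolvingSet G S) (hmin : ∀ T : Finset V, IsResolvingSet G T → S.card ≤ T.card) :
    metricDim G = S.card :=
  le_antisymm (Nat.sInf_le ⟨S, hS, rfl⟩)
    (le_csInf ⟨_, S, hS, rfl⟩ fun _ ⟨T, hT, hcard⟩ => hcard ▸ hmin T hT)

theorem IsResolvingSet.card_le_two_pow {V : Type*} {G : SimpleGraph V} [DecidableRel G.Adj]
    {S T R : Finset V} (hS : IsResolvingSet G S)
    (hR : ∀ u ∈ T, ∀ v ∈ S, G.Adj u v → v ∈ R)
    (hT : ∀ u ∈ T, ∀ w ∈ T, ∀ v ∈ S, (G.Adj u v ↔ G.Adj w v) → G.dist u v = G.dist w v) :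
    T.card ≤ 2 ^ R.card := by
  rw [← Finset.card_powerset]
  refine Finset.card_le_card_of_injOn (fun u => R.filter (G.Adj u))
    (fun u _ => Finset.mem_powerset.2 (Finset.filter_subset _ _)) fun u hu w hw huw => ?_
  by_contra hne
  obtain ⟨v, hv, hd⟩ := hS u w hne
  have hmem : ∀ x ∈ T, v ∈ R.filter (G.Adj x) ↔ G.Adj x v := fun x hx => by
    simpa only [Finset.mem_filter, and_iff_right_iff_imp] using hR x hx v hv
  refine hd (hT u hu w hw v hv ?_)
  rw [← hmem u hu, ← hmem w hw]
  exact Iff.of_eq (congrArg (v ∈ ·) huw)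

theorem SimpleGraph.Coloring.even_dist_iff {V : Type*} {G : SimpleGraph V} (c : G.Coloring Bool)
    {u v : V} (h : G.Reachable u v) : Even (G.dist u v) ↔ (c u ↔ c v) := by
  obtain ⟨p, hp⟩ := h.exists_walk_length_eq_dist
  rw [← hp, c.even_length_iff_congr p]

theorem SimpleGraph.Reachable.two_le_dist {V : Type*} {G : SimpleGraph V} {u v : V}
    (h : G.Reachable u v) (hne : u ≠ v) (hadj : ¬G.Adj u v) : 2 ≤ G.dist u v := by
  have h₀ : G.dist u v ≠ 0 := fun h₀ => hne (h.dist_eq_zero_iff.1 h₀)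
  have h₁ : G.dist u v ≠ 1 := fun h₁ => hadj (SimpleGraph.dist_eq_one_iff_adj.1 h₁)
  omega

theorem ZMod.crossProduct_ne_zero_of_ne {v w : Fin 3 → ZMod 2} (hv : v ≠ 0) (hw : w ≠ 0)
    (hvw : v ≠ w) : crossProduct v w ≠ 0 := by
  rw [crossProduct_ne_zero_iff_linearIndependent, LinearIndependent.pair_iff' hv]
  intro a
  fin_cases a
  · show ¬(0 : ZMod 2) • v = w
    simpa using hw.symm
  · show ¬(1 : ZMod 2) • v = w
    simpa using hvw

abbrev HeawoodVertex := {v : Fin 3 → ZMod 2 // v ≠ 0} × Bool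

instance : DecidableRel heawoodGraph.Adj := fun x y =>
  inferInstanceAs (Decidable (x.2 ≠ y.2 ∧ ∑ k : Fin 3, x.1.val k * y.1.val k = 0))

theorem heawoodGraph_adj {x y : HeawoodVertex} :
    heawoodGraph.Adj x y ↔ x.2 ≠ y.2 ∧ x.1.1 ⬝ᵥ y.1.1 = 0 := Iff.rfl

def heawoodGraph.sideColoring : heawoodGraph.Coloring Bool :=
  SimpleGraph.Coloring.mk Prod.snd fun h => h.1

theorem heawoodGraph_exists_adj_adj {x y : HeawoodVertex}
    (hne : x ≠ y) (hside : x.2 = y.2) : ∃ z, heawoodGraph.Adj x z ∧ heawoodGraph.Adj z y := by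
  have hne' : x.1.1 ≠ y.1.1 := fun h => hne (Prod.ext (Subtype.ext h) hside)
  refine ⟨(⟨crossProduct x.1.1 y.1.1, ZMod.crossProduct_ne_zero_of_ne x.1.2 y.1.2 hne'⟩, !x.2), ?_, ?_⟩
  · exact heawoodGraph_adj.2 ⟨by simp, dot_self_cross _ _⟩
  · refine heawoodGraph_adj.2 ⟨by simp [hside], ?_⟩
    rw [dotProduct_comm]
    exact dot_cross_self _ _

theorem heawoodGraph_exists_adj (x : HeawoodVertex) : ∃ y, heawoodGraph.Adj x y := by
  obtain ⟨p, hp⟩ := Fintype.exists_ne_of_one_lt_card (by decide) x.1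
  obtain ⟨y, hy, -⟩ := heawoodGraph_exists_adj_adj (x := x) (y := (p, x.2))
    (fun h => hp (congrArg Prod.fst h).symm) rfl
  exact ⟨y, hy⟩

theorem heawoodGraph_dist_of_side_eq {x y : HeawoodVertex}
    (hne : x ≠ y) (hside : x.2 = y.2) : heawoodGraph.dist x y = 2 := by
  obtain ⟨z, hxz, hzy⟩ := heawoodGraph_exists_adj_adj hne hside
  let p := hxz.toWalk.append hzy.toWalk
  have hle : heawoodGraph.dist x y ≤ 2 := by simpa [p] using SimpleGraph.dist_le p
  have hge := SimpleGraph.Reachable.two_le_dist ⟨p⟩ hne fun h => h.1 hside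
  omega

theorem heawoodGraph_dist_of_side_ne {x y : HeawoodVertex}
    (hadj : ¬heawoodGraph.Adj x y) (hside : x.2 ≠ y.2) : heawoodGraph.dist x y = 3 := by
  obtain ⟨z, hxz⟩ := heawoodGraph_exists_adj x
  have hzy : z ≠ y := by rintro rfl; exact hadj hxz
  obtain ⟨w, hzw, hwy⟩ := heawoodGraph_exists_adj_adj hzy
    ((Bool.eq_not_iff.2 hxz.1.symm).trans (Bool.eq_not_iff.2 hside.symm).symm)
  let p := hxz.toWalk.append (hzw.toWalk.append hwy.toWalk)
  have hle : heawoodGraph.dist x y ≤ 3 := by simpa [p] using SimpleGraph.dist_le p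
  have hge := SimpleGraph.Reachable.two_le_dist ⟨p⟩ (by rintro rfl; exact hside rfl) hadj
  have hodd : ¬Even (heawoodGraph.dist x y) := by
    rw [heawoodGraph.sideColoring.even_dist_iff ⟨p⟩]
    exact fun h => hside (Bool.coe_iff_coe.1 h)
  obtain h | h : heawoodGraph.dist x y = 2 ∨ heawoodGraph.dist x y = 3 := by omega
  · exact absurd (h.symm ▸ even_two) hodd
  · exact h

theorem heawoodGraph_dist (x y : HeawoodVertex) :
    heawoodGraph.dist x y =
      if x = y then 0 else if heawoodGraph.Adj x y then 1 else if x.2 = y.2 then 2 else 3 := by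
  split_ifs with hxy hadj hside
  · rw [hxy, SimpleGraph.dist_self]
  · exact SimpleGraph.dist_eq_one_iff_adj.2 hadj
  · exact heawoodGraph_dist_of_side_eq hxy hside
  · exact heawoodGraph_dist_of_side_ne hadj hside

def heawoodResolvingSet : Finset HeawoodVertex :=
  { (⟨![1, 0, 0], by decide⟩, false), (⟨![0, 1, 0], by decide⟩, false),
    (⟨![0, 0, 1], by decide⟩, false), (⟨![1, 1, 0], by decide⟩, true),
    (⟨![1, 0, 1], by decide⟩, true) }

theorem card_heawoodResolvingSet : heawoodResolvingSet.card = 5 := by decide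

theorem isResolvingSet_heawoodResolvingSet : IsResolvingSet heawoodGraph heawoodResolvingSet := by
  intro u w
  simp only [heawoodGraph_dist]
  revert u w
  decide

theorem card_filter_snd_eq_seven (s : Bool) :
    ((Finset.univ : Finset HeawoodVertex).filter (·.2 = s)).card = 7 := by
  cases s <;> decide

theorem IsResolvingSet.heawoodGraph_seven_le {S : Finset HeawoodVertex}
    (hS : IsResolvingSet heawoodGraph S) (s : Bool) :
    7 ≤ (S.filter (·.2 = s)).card + 2 ^ (S.filter (·.2 = !s)).card := by
  set T := (Finset.univ.filter (·.2 = s)) \ S.filter (·.2 = s)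
  have hT : ∀ u ∈ T, u ∉ S ∧ u.2 = s := fun u hu => by
    simp only [T, Finset.mem_sdiff, Finset.mem_filter, Finset.mem_univ, true_and] at hu
    tauto
  have hcard : 7 - (S.filter (·.2 = s)).card ≤ T.card :=
    card_filter_snd_eq_seven s ▸ Finset.le_card_sdiff _ _
  have hpow : T.card ≤ 2 ^ (S.filter (·.2 = !s)).card := by
    refine hS.card_le_two_pow (fun u hu v hv hadj => ?_) fun u hu w hw v hv hiff => ?_
    · exact Finset.mem_filter.2 ⟨hv, Bool.eq_not_iff.2 ((hT u hu).2 ▸ hadj.1.symm)⟩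
    · have huv : u ≠ v := fun h => (hT u hu).1 (h ▸ hv)
      have hwv : w ≠ v := fun h => (hT w hw).1 (h ▸ hv)
      simp only [heawoodGraph_dist, if_neg huv, if_neg hwv, hiff, (hT u hu).2, (hT w hw).2]
  omega

theorem IsResolvingSet.heawoodGraph_five_le_card {S : Finset HeawoodVertex}
    (hS : IsResolvingSet heawoodGraph S) : 5 ≤ S.card := by
  have hpoints := hS.heawoodGraph_seven_le false
  have hlines := hS.heawoodGraph_seven_le true
  have hsplit := Finset.card_filter_add_card_filter_not (s := S) (·.2 = false)
  simp only [Bool.not_eq_false, Bool.not_false, Bool.not_true] at hpoints hlines hsplit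
  by_contra! hlt
  have ha : (S.filter (·.2 = false)).card ≤ 4 := by omega
  have hb : (S.filter (·.2 = true)).card ≤ 4 := by omega
  interval_cases (S.filter (·.2 = false)).card <;> interval_cases (S.filter (·.2 = true)).card <;> omega

theorem metricDim_heawoodGraph : metricDim heawoodGraph = 5 := by
  rw [← card_heawoodResolvingSet]
  exact metricDim_eq_card_of_forall_card_le isResolvingSet_heawoodResolvingSet fun _ hT =>
    card_heawoodResolvingSet ▸ hT.heawoodGraph_five_le_card
end
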